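/- Let σ̌ : ℝ^d × ℝ^d → Matrix (Fin d) (Fin d) ℝ be twice continuously differentiable with compact support, and let q : ℝ^d → ℝ be twice continuously differentiable. Define a_{il}(x) = ∫ ∑_k σ̌_{ik}(x,y) σ̌_{lk}(x,y) dy and s_i(x) = ∫ ∑_k σ̌_{ik}(x,y) ( ∑_l ∂_{x_l} σ̌_{lk}(x,y) ) dy. Then all the derivatives below exist and for every x: ∑_{i=1}^d ∂_{x_i} [ ∫ ∑_k ( ∑_l ∂_{x_l}( q(x) σ̌_{lk}(x,y) ) ) σ̌_{ik}(x,y) dy ] = ∑_{i,l} ∂_{x_i}( a_{il}(x) ∂_{x_l} q(x) ) + ∑_i ∂_{x_i}( q(x) s_i(x) ), that is, the quadratic-covariation correction term arising in the Stratonovich-to-Itô conversion of the stochastic Reynolds transport theorem equals ∇·(a∇q) + ∇·(q σ(∇·σ)). -/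

import Mathlib

open MeasureTheory Matrix

section Aux

private lemma hcs_finsetSum {α : Type*} [TopologicalSpace α] {ι : Type*} (s : Finset ι)
    (f : ι → α → ℝ) (h : ∀ i ∈ s, HasCompactSupport (f i)) :
    HasCompactSupport (fun x => ∑ i ∈ s, f i x) := by
  classical
  induction s using Finset.induction_on with
  | empty => simp [HasCompactSupport, tsupport, Function.support]
  | insert a s' hx ih =>
      simp only [Finset.sum_insert hx]
      exact (h _ (Finset.mem_insert_self _ _)).add
        (ih fun i hi => h i (Finset.mem_insert_of_mem hi))

private lemma slice_hcs {d : ℕ} (f : ((Fin d → ℝ) × (Fin d → ℝ)) → ℝ)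
    (hc : HasCompactSupport f) (x : Fin d → ℝ) :
    HasCompactSupport (fun y => f (x, y)) := by
  apply HasCompactSupport.intro (hc.image continuous_snd)
  intro y hy
  by_contra h
  exact hy ⟨(x, y), subset_tsupport f h, rfl⟩

private lemma slice_int {d : ℕ} (f : ((Fin d → ℝ) × (Fin d → ℝ)) → ℝ)
    (hf : Continuous f) (hc : HasCompactSupport f) (x : Fin d → ℝ) :
    Integrable (fun y => f (x, y)) :=
  (hf.comp (Continuous.prodMk_right x)).integrable_of_hasCompactSupport (slice_hcs f hc x)

private lemma partial_fderiv {d : ℕ} (f : ((Fin d → ℝ) × (Fin d → ℝ)) → ℝ)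
    (hf : Differentiable ℝ f) (x y : Fin d → ℝ) (v : Fin d → ℝ) :
    fderiv ℝ (fun x' => f (x', y)) x v = fderiv ℝ f (x, y) (v, 0) := by
  have h : fderiv ℝ (fun x' => f (x', y)) x
      = (fderiv ℝ f (x, y)).comp (ContinuousLinearMap.inl ℝ (Fin d → ℝ) (Fin d → ℝ)) :=
    ((hf (x, y)).hasFDerivAt.comp x (hasFDerivAt_prodMk_left x y)).fderiv
  rw [h]; rfl

private lemma param_diff {d : ℕ} (f : ((Fin d → ℝ) × (Fin d → ℝ)) → ℝ)
    (hf : ContDiff ℝ 1 f) (hc : HasCompactSupport f) (x₀ : Fin d → ℝ) :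
    DifferentiableAt ℝ (fun x => ∫ y, f (x, y)) x₀ := by
  obtain ⟨C, hC⟩ := (hc.fderiv ℝ).exists_bound_of_continuous (hf.continuous_fderiv one_ne_zero)
  set K : Set (Fin d → ℝ) := Prod.snd '' tsupport f with hK
  have hKc : IsCompact K := hc.image continuous_snd
  have hdiff : Differentiable ℝ f := hf.differentiable one_ne_zero
  have key : HasFDerivAt (fun x => ∫ y, f (x, y))
      (∫ y, (fderiv ℝ f (x₀, y)).comp (ContinuousLinearMap.inl ℝ _ _)) x₀ := by
    apply hasFDerivAt_integral_of_dominated_of_fderiv_le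
      (F' := fun x y => (fderiv ℝ f (x, y)).comp (ContinuousLinearMap.inl ℝ _ _))
      (bound := K.indicator fun _ => C) (Metric.ball_mem_nhds x₀ one_pos)
    · filter_upwards with x
      exact (hf.continuous.comp (Continuous.prodMk_right x)).aestronglyMeasurable
    · exact slice_int f hf.continuous hc x₀
    · apply Continuous.aestronglyMeasurable
      exact (((hf.continuous_fderiv one_ne_zero).comp (Continuous.prodMk_right x₀)).clm_comp
        continuous_const)
    · filter_upwards with y
      intro x _
      by_cases hy : y ∈ K
      · rw [Set.indicator_of_mem hy]
        refine le_trans (ContinuousLinearMap.opNorm_comp_le _ _) ?_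
        calc ‖fderiv ℝ f (x, y)‖ * ‖ContinuousLinearMap.inl ℝ (Fin d → ℝ) (Fin d → ℝ)‖
            ≤ C * 1 := by
              apply mul_le_mul (hC _) ?_ (norm_nonneg _) ((norm_nonneg _).trans (hC (x, y)))
              apply ContinuousLinearMap.opNorm_le_bound _ zero_le_one
              intro v; simp [Prod.norm_def]
          _ = C := mul_one C
      · have hxy : (x, y) ∉ tsupport f := fun h => hy ⟨(x, y), h, rfl⟩
        have h0 : fderiv ℝ f (x, y) = 0 := fderiv_of_notMem_tsupport ℝ hxy
        simp [h0, Set.indicator_of_notMem hy]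
    · exact (integrable_indicator_iff hKc.isClosed.measurableSet).2
        (integrableOn_const hKc.measure_lt_top.ne)
    · filter_upwards with y
      intro x _
      exact (hdiff (x, y)).hasFDerivAt.comp x (hasFDerivAt_prodMk_left x y)
  exact key.differentiableAt
end Aux

/-- For a twice continuously differentiable, compactly supported noise kernel `σ̌` and a
twice continuously differentiable scalar `q`, the quadratic-covariation correction term
arising in the Stratonovich-to-Itô conversion of the stochastic Reynolds transport theorem,
`∑_i ∂_{x_i} ∫ ∑_k (∑_l ∂_{x_l}(q σ̌_{lk})) σ̌_{ik} dy`, equals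
`∇·(a ∇q) + ∇·(q σ(∇·σ))`, where `a` is the variance tensor and `σ(∇·σ)` the
divergence-of-noise vector field; all the derivatives involved exist. -/
theorem strat_to_ito_covariation_term
    (d : ℕ)
    (σ : (Fin d → ℝ) → (Fin d → ℝ) → Matrix (Fin d) (Fin d) ℝ)
    (hσ : ∀ i k : Fin d,
      ContDiff ℝ 2 fun p : (Fin d → ℝ) × (Fin d → ℝ) => σ p.1 p.2 i k)
    (hsupp : ∀ i k : Fin d,
      HasCompactSupport fun p : (Fin d → ℝ) × (Fin d → ℝ) => σ p.1 p.2 i k)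
    (q : (Fin d → ℝ) → ℝ) (hq : ContDiff ℝ 2 q)
    (a : Fin d → Fin d → (Fin d → ℝ) → ℝ)
    (ha : ∀ (i l : Fin d) (x : Fin d → ℝ),
      a i l x = ∫ y : Fin d → ℝ, ∑ k, σ x y i k * σ x y l k)
    (s : Fin d → (Fin d → ℝ) → ℝ)
    (hs : ∀ (i : Fin d) (x : Fin d → ℝ),
      s i x = ∫ y : Fin d → ℝ,
        ∑ k, σ x y i k * ∑ l, fderiv ℝ (fun x' => σ x' y l k) x (Pi.single l 1))
    (F : Fin d → (Fin d → ℝ) → ℝ)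
    (hF : ∀ (i : Fin d) (x : Fin d → ℝ),
      F i x = ∫ y : Fin d → ℝ,
        ∑ k, (∑ l, fderiv ℝ (fun x' => q x' * σ x' y l k) x (Pi.single l 1)) * σ x y i k) :
    ∀ x : Fin d → ℝ,
      (∀ i : Fin d, DifferentiableAt ℝ (F i) x) ∧
      (∀ i l : Fin d, DifferentiableAt ℝ
        (fun x' => a i l x' * fderiv ℝ q x' (Pi.single l 1)) x) ∧
      (∀ i : Fin d, DifferentiableAt ℝ (fun x' => q x' * s i x') x) ∧
      (∑ i, fderiv ℝ (F i) x (Pi.single i 1)) =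
        (∑ i, ∑ l, fderiv ℝ
            (fun x' => a i l x' * fderiv ℝ q x' (Pi.single l 1)) x (Pi.single i 1)) +
          ∑ i, fderiv ℝ (fun x' => q x' * s i x') x (Pi.single i 1) := by
  have htwo : (1 : WithTop ℕ∞) ≤ 2 := by norm_num
  have hqd : Differentiable ℝ q := hq.differentiable (by norm_num)
  have hσd : ∀ l k : Fin d, Differentiable ℝ (fun p : (Fin d → ℝ) × (Fin d → ℝ) => σ p.1 p.2 l k) :=
    fun l k => (hσ l k).differentiable (by norm_num)
  have hσc : ∀ l k : Fin d, Continuous (fun p : (Fin d → ℝ) × (Fin d → ℝ) => σ p.1 p.2 l k) :=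
    fun l k => (hσd l k).continuous
  have hslice : ∀ (l k : Fin d) (y : Fin d → ℝ), Differentiable ℝ (fun x' => σ x' y l k) := by
    intro l k y x'
    exact ((hσd l k) (x', y)).comp x' ((differentiableAt_id (𝕜 := ℝ) (x := x')).prodMk (differentiableAt_const y))
  have hpart : ∀ (l k : Fin d) (x' y : Fin d → ℝ) (v : Fin d → ℝ),
      fderiv ℝ (fun x'' => σ x'' y l k) x' v
        = fderiv ℝ (fun p : (Fin d → ℝ) × (Fin d → ℝ) => σ p.1 p.2 l k) (x', y) (v, 0) :=
    fun l k x' y v => partial_fderiv _ (hσd l k) x' y v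
  -- the x-derivative kernels
  have hDc1 : ∀ l k : Fin d, ContDiff ℝ 1
      (fun p : (Fin d → ℝ) × (Fin d → ℝ) =>
        fderiv ℝ (fun p' : (Fin d → ℝ) × (Fin d → ℝ) => σ p'.1 p'.2 l k) p
          (Pi.single l 1, 0)) :=
    fun l k => ((hσ l k).fderiv_right (le_refl 2)).clm_apply contDiff_const
  have hDcs : ∀ l k : Fin d, HasCompactSupport
      (fun p : (Fin d → ℝ) × (Fin d → ℝ) =>
        fderiv ℝ (fun p' : (Fin d → ℝ) × (Fin d → ℝ) => σ p'.1 p'.2 l k) p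
          (Pi.single l 1, 0)) :=
    fun l k => (hsupp l k).fderiv_apply ℝ _
  -- variance-tensor integrand
  have hGc1 : ∀ i l : Fin d, ContDiff ℝ 1
      (fun p : (Fin d → ℝ) × (Fin d → ℝ) => ∑ k, σ p.1 p.2 i k * σ p.1 p.2 l k) :=
    fun i l => ContDiff.sum fun k _ => ((hσ i k).of_le htwo).mul ((hσ l k).of_le htwo)
  have hGcs : ∀ i l : Fin d, HasCompactSupport
      (fun p : (Fin d → ℝ) × (Fin d → ℝ) => ∑ k, σ p.1 p.2 i k * σ p.1 p.2 l k) :=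
    fun i l => hcs_finsetSum _ _ fun k _ => (hsupp i k).mul_right
  have hHc1 : ∀ i : Fin d, ContDiff ℝ 1
      (fun p : (Fin d → ℝ) × (Fin d → ℝ) => ∑ k, σ p.1 p.2 i k *
        ∑ l, fderiv ℝ (fun p' : (Fin d → ℝ) × (Fin d → ℝ) => σ p'.1 p'.2 l k) p
          (Pi.single l 1, 0)) :=
    fun i => ContDiff.sum fun k _ => ((hσ i k).of_le htwo).mul (ContDiff.sum fun l _ => hDc1 l k)
  have hHcs : ∀ i : Fin d, HasCompactSupport
      (fun p : (Fin d → ℝ) × (Fin d → ℝ) => ∑ k, σ p.1 p.2 i k *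
        ∑ l, fderiv ℝ (fun p' : (Fin d → ℝ) × (Fin d → ℝ) => σ p'.1 p'.2 l k) p
          (Pi.single l 1, 0)) :=
    fun i => hcs_finsetSum _ _ fun k _ => (hsupp i k).mul_right
  have haeq : ∀ i l : Fin d, a i l = fun x' => ∫ y,
      (fun p : (Fin d → ℝ) × (Fin d → ℝ) => ∑ k, σ p.1 p.2 i k * σ p.1 p.2 l k) (x', y) :=
    fun i l => funext fun x' => ha i l x'
  have hseq : ∀ i : Fin d, s i = fun x' => ∫ y,
      (fun p : (Fin d → ℝ) × (Fin d → ℝ) => ∑ k, σ p.1 p.2 i k *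
        ∑ l, fderiv ℝ (fun p' : (Fin d → ℝ) × (Fin d → ℝ) => σ p'.1 p'.2 l k) p
          (Pi.single l 1, 0)) (x', y) := by
    intro i; funext x'; rw [hs]
    refine congrArg (fun g : (Fin d → ℝ) → ℝ => ∫ y, g y) (funext fun y => ?_)
    refine congrArg (fun t => Finset.sum Finset.univ t) (funext fun k => ?_)
    exact congrArg (fun t => σ x' y i k * t)
      (Finset.sum_congr rfl fun l _ => hpart l k x' y _)
  have ha_diff : ∀ (i l : Fin d) (x' : Fin d → ℝ), DifferentiableAt ℝ (a i l) x' := by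
    intro i l x'; rw [haeq i l]; exact param_diff _ (hGc1 i l) (hGcs i l) x'
  have hs_diff : ∀ (i : Fin d) (x' : Fin d → ℝ), DifferentiableAt ℝ (s i) x' := by
    intro i x'; rw [hseq i]; exact param_diff _ (hHc1 i) (hHcs i) x'
  have hdq : ∀ l : Fin d, Differentiable ℝ (fun x' => fderiv ℝ q x' (Pi.single l 1)) :=
    fun l => ((hq.fderiv_right (m := 1) (le_refl 2)).clm_apply contDiff_const).differentiable one_ne_zero
  have hFi : ∀ i : Fin d, F i = fun x' =>
      (∑ l, a i l x' * fderiv ℝ q x' (Pi.single l 1)) + q x' * s i x' := by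
    intro i; funext x'
    rw [hF]
    have hm : ∀ (l k : Fin d) (y : Fin d → ℝ),
        fderiv ℝ (fun x'' => q x'' * σ x'' y l k) x' (Pi.single l 1)
          = q x' * fderiv ℝ (fun p : (Fin d → ℝ) × (Fin d → ℝ) => σ p.1 p.2 l k) (x', y)
              (Pi.single l 1, 0)
            + σ x' y l k * fderiv ℝ q x' (Pi.single l 1) := by
      intro l k y
      rw [fderiv_fun_mul (hqd x') (hslice l k y x')]
      simp [hpart l k x' y]
    have point : ∀ y : Fin d → ℝ,
        (∑ k, (∑ l, fderiv ℝ (fun x'' => q x'' * σ x'' y l k) x' (Pi.single l 1))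
            * σ x' y i k)
          = (∑ l, (∑ k, σ x' y i k * σ x' y l k) * fderiv ℝ q x' (Pi.single l 1))
            + q x' * ∑ k, σ x' y i k *
                ∑ l, fderiv ℝ (fun p : (Fin d → ℝ) × (Fin d → ℝ) => σ p.1 p.2 l k) (x', y)
                  (Pi.single l 1, 0) := by
      intro y
      simp only [hm]
      simp only [Finset.sum_add_distrib, add_mul, Finset.sum_mul, Finset.mul_sum]
      rw [add_comm, Finset.sum_comm]
      congr 1
      · exact Finset.sum_congr rfl fun k _ => Finset.sum_congr rfl fun l _ => by ring
      · exact Finset.sum_congr rfl fun l _ => Finset.sum_congr rfl fun k _ => by ring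
    calc (∫ y, ∑ k, (∑ l, fderiv ℝ (fun x'' => q x'' * σ x'' y l k) x' (Pi.single l 1))
            * σ x' y i k)
        = ∫ y, ((∑ l, (∑ k, σ x' y i k * σ x' y l k) * fderiv ℝ q x' (Pi.single l 1))
            + q x' * ∑ k, σ x' y i k *
                ∑ l, fderiv ℝ (fun p : (Fin d → ℝ) × (Fin d → ℝ) => σ p.1 p.2 l k) (x', y)
                  (Pi.single l 1, 0)) :=
          congrArg (fun g : (Fin d → ℝ) → ℝ => ∫ y, g y) (funext point)
      _ = (∑ l, a i l x' * fderiv ℝ q x' (Pi.single l 1)) + q x' * s i x' := by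
          rw [integral_add
            (integrable_finset_sum _ fun l _ =>
              (slice_int _ (hGc1 i l).continuous (hGcs i l) x').mul_const _)
            (((slice_int _ (hHc1 i).continuous (hHcs i) x')).const_mul _),
            integral_finset_sum _ (fun l _ =>
              (slice_int _ (hGc1 i l).continuous (hGcs i l) x').mul_const _),
            integral_const_mul]
          congr 1
          · refine Finset.sum_congr rfl fun l _ => ?_
            rw [integral_mul_const, ← ha i l x']
          · rw [hseq i]
  intro x
  refine ⟨?_, ?_, ?_, ?_⟩
  · intro i
    rw [hFi i]
    exact (DifferentiableAt.fun_sum fun l _ => (ha_diff i l x).mul (hdq l x)).add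
      ((hqd x).mul (hs_diff i x))
  · intro i l
    exact (ha_diff i l x).mul (hdq l x)
  · intro i
    exact (hqd x).mul (hs_diff i x)
  · have hFd : ∀ i : Fin d, fderiv ℝ (F i) x =
        (∑ l, fderiv ℝ (fun x' => a i l x' * fderiv ℝ q x' (Pi.single l 1)) x) +
          fderiv ℝ (fun x' => q x' * s i x') x := by
      intro i
      rw [hFi i, fderiv_fun_add (DifferentiableAt.fun_sum fun l _ => (ha_diff i l x).fun_mul (hdq l x))
        ((hqd x).fun_mul (hs_diff i x)),
        fderiv_fun_sum fun l _ => (ha_diff i l x).fun_mul (hdq l x)]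
    simp only [hFd, ContinuousLinearMap.add_apply, ContinuousLinearMap.coe_sum',
      Finset.sum_apply, Finset.sum_add_distrib]
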